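/- Let D ⊆ ℝ², let p be an interior point of D, and let f : D → ℝ have continuous partial derivatives of first and second order in an open neighborhood of p. Assume Δf(p) ≠ 0, where Δf(p) := f_xx(p)·f_yy(p) − f_xy(p)². Then f has a saddle point at p if and only if ∇f(p) = 0 and Δf(p) < 0. -/

import Mathlib

open Set Filter Topology

/-- `γ : [a, b] → D` is a regular path in `D`: it is continuous on `[a, b]`, maps `[a, b]`
into `D`, is differentiable on `(a, b)`, and its derivative is nonvanishing on `(a, b)`. -/
def IsRegularPath (D : Set (ℝ × ℝ)) (γ : ℝ → ℝ × ℝ) (a b : ℝ) : Prop :=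
  a < b ∧ ContinuousOn γ (Set.Icc a b) ∧ Set.MapsTo γ (Set.Icc a b) D ∧
    ∀ t ∈ Set.Ioo a b, DifferentiableAt ℝ γ t ∧ deriv γ t ≠ 0

/-- A function of one real variable has a strict local maximum at `t`. -/
def IsStrictLocalMax (g : ℝ → ℝ) (t : ℝ) : Prop :=
  ∀ᶠ s in 𝓝[≠] t, g s < g t

/-- A function of one real variable has a strict local minimum at `t`. -/
def IsStrictLocalMin (g : ℝ → ℝ) (t : ℝ) : Prop :=
  ∀ᶠ s in 𝓝[≠] t, g t < g s

/-- `f` has a saddle point at `p`: there are regular paths `γ₁, γ₂` in `D` passing through `p`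
and intersecting transversally at `p` (their tangent vectors at `p` are not multiples of each
other) such that `f` has a local maximum at `p` along `γ₁` and a local minimum at `p`
along `γ₂`. -/
def HasSaddleAt (D : Set (ℝ × ℝ)) (f : ℝ × ℝ → ℝ) (p : ℝ × ℝ) : Prop :=
  ∃ (a₁ b₁ a₂ b₂ t₁ t₂ : ℝ) (γ₁ γ₂ : ℝ → ℝ × ℝ),
    IsRegularPath D γ₁ a₁ b₁ ∧ IsRegularPath D γ₂ a₂ b₂ ∧
    t₁ ∈ Set.Ioo a₁ b₁ ∧ t₂ ∈ Set.Ioo a₂ b₂ ∧ γ₁ t₁ = p ∧ γ₂ t₂ = p ∧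
    (∀ c : ℝ, deriv γ₁ t₁ ≠ c • deriv γ₂ t₂) ∧
    (∀ c : ℝ, deriv γ₂ t₂ ≠ c • deriv γ₁ t₁) ∧
    IsLocalMax (f ∘ γ₁) t₁ ∧ IsLocalMin (f ∘ γ₂) t₂

/-- `f` has a strict saddle point at `p`: as for a saddle point, but with a strict local
maximum along `γ₁` and a strict local minimum along `γ₂`. -/
def HasStrictSaddleAt (D : Set (ℝ × ℝ)) (f : ℝ × ℝ → ℝ) (p : ℝ × ℝ) : Prop :=
  ∃ (a₁ b₁ a₂ b₂ t₁ t₂ : ℝ) (γ₁ γ₂ : ℝ → ℝ × ℝ),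
    IsRegularPath D γ₁ a₁ b₁ ∧ IsRegularPath D γ₂ a₂ b₂ ∧
    t₁ ∈ Set.Ioo a₁ b₁ ∧ t₂ ∈ Set.Ioo a₂ b₂ ∧ γ₁ t₁ = p ∧ γ₂ t₂ = p ∧
    (∀ c : ℝ, deriv γ₁ t₁ ≠ c • deriv γ₂ t₂) ∧
    (∀ c : ℝ, deriv γ₂ t₂ ≠ c • deriv γ₁ t₁) ∧
    IsStrictLocalMax (f ∘ γ₁) t₁ ∧ IsStrictLocalMin (f ∘ γ₂) t₂

/-- The second partial derivative `f_xx` at `p`. -/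
noncomputable def fxx (f : ℝ × ℝ → ℝ) (p : ℝ × ℝ) : ℝ :=
  fderiv ℝ (fun q => fderiv ℝ f q (1, 0)) p (1, 0)

/-- The mixed second partial derivative `f_xy` at `p`. -/
noncomputable def fxy (f : ℝ × ℝ → ℝ) (p : ℝ × ℝ) : ℝ :=
  fderiv ℝ (fun q => fderiv ℝ f q (1, 0)) p (0, 1)

/-- The second partial derivative `f_yy` at `p`. -/
noncomputable def fyy (f : ℝ × ℝ → ℝ) (p : ℝ × ℝ) : ℝ :=
  fderiv ℝ (fun q => fderiv ℝ f q (0, 1)) p (0, 1)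

/-- The Hessian form `Q_p(h) = f_xx(p) h₁² + 2 f_xy(p) h₁ h₂ + f_yy(p) h₂²` of `f` at `p`. -/
noncomputable def hessianForm (f : ℝ × ℝ → ℝ) (p h : ℝ × ℝ) : ℝ :=
  fxx f p * h.1 ^ 2 + 2 * fxy f p * h.1 * h.2 + fyy f p * h.2 ^ 2


/-! At a saddle point `p` Fermat's rule along the two transversal paths kills `Df(p)` on a basis,
so `p` is critical. If moreover `Δf(p) > 0`, the Hessian is definite; by continuity of the second
derivative it stays definite near `p`, uniformly on unit vectors, so `f` is strictly convex (or
concave) along every short segment through `p` and `p` is a strict local extremum of `f`. A path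
with nonzero velocity does not return to `p` immediately, so along it `f` cannot have an extremum
of the opposite kind at `p`, contradicting one of the two paths.

Conversely, if `p` is critical and `Δf(p) < 0`, the Hessian form takes both signs, and along
straight lines in two such directions `f` has a local maximum and a local minimum at `p`; the two
directions cannot be parallel since the form has the same sign on parallel vectors. -/

open Metric

theorem LinearMap.eq_zero_of_apply_eq_zero_of_ne_smul {K V W : Type*} [Field K] [AddCommGroup V]
    [Module K V] [AddCommGroup W] [Module K W] (hV : Module.finrank K V = 2) {u w : V}
    (hu : u ≠ 0) (hwu : ∀ c : K, w ≠ c • u) {L : V →ₗ[K] W} (hLu : L u = 0) (hLw : L w = 0) :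
    L = 0 := by
  have hli : LinearIndependent K ![u, w] :=
    (LinearIndependent.pair_iff' hu).2 fun c h => hwu c h.symm
  refine LinearMap.ext_on_range (hli.span_eq_top_of_card_eq_finrank (by simp [hV])) fun i => ?_
  fin_cases i <;> simpa

theorem strictConvexOn_of_hasDerivAt2_pos {S : Set ℝ} (hS : Convex ℝ S) (hSo : IsOpen S)
    {g g' g'' : ℝ → ℝ} (hg : ∀ t ∈ S, HasDerivAt g (g' t) t)
    (hg' : ∀ t ∈ S, HasDerivAt g' (g'' t) t) (hpos : ∀ t ∈ S, 0 < g'' t) :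
    StrictConvexOn ℝ S g := by
  have hmono : StrictMonoOn g' S := by
    refine strictMonoOn_of_hasDerivWithinAt_pos (f' := g'') hS
      (fun t ht => (hg' t ht).continuousAt.continuousWithinAt) (fun t ht => ?_) ?_
    · rw [hSo.interior_eq] at ht ⊢
      exact (hg' t ht).hasDerivWithinAt
    · rwa [hSo.interior_eq]
  have hderiv : StrictMonoOn (deriv g) (interior S) := by
    rw [hSo.interior_eq]
    exact hmono.congr fun t ht => ((hg t ht).deriv).symm
  exact hderiv.strictConvexOn_of_deriv hS fun t ht => (hg t ht).continuousAt.continuousWithinAt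

theorem StrictConvexOn.lt_of_hasDerivAt_eq_zero {S : Set ℝ} {g : ℝ → ℝ} {x₀ x : ℝ}
    (hg : StrictConvexOn ℝ S g) (hx₀ : x₀ ∈ S) (hd : HasDerivAt g 0 x₀) (hx : x ∈ S)
    (hne : x ≠ x₀) : g x₀ < g x := by
  rcases hne.lt_or_gt with h | h
  · exact (slope_neg_iff_of_le h.le).1 (hg.slope_lt_of_hasDerivAt hx hx₀ h hd)
  · exact (slope_pos_iff_of_le h.le).1 (hg.lt_slope_of_hasDerivAt hx₀ hx h hd)

section Line

variable {E : Type*} [NormedAddCommGroup E] [NormedSpace ℝ E] {f : E → ℝ} {p v : E}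

theorem hasDerivAt_line (p v : E) (t : ℝ) : HasDerivAt (fun s : ℝ => p + s • v) v t := by
  simpa using ((hasDerivAt_id t).smul_const v).const_add p

theorem DifferentiableAt.hasDerivAt_comp_line {t : ℝ} (hf : DifferentiableAt ℝ f (p + t • v)) :
    HasDerivAt (fun s : ℝ => f (p + s • v)) (fderiv ℝ f (p + t • v) v) t :=
  hf.hasFDerivAt.comp_hasDerivAt t (hasDerivAt_line p v t)

theorem DifferentiableAt.hasDerivAt_fderiv_comp_line {t : ℝ}
    (hf : DifferentiableAt ℝ (fderiv ℝ f) (p + t • v)) :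
    HasDerivAt (fun s : ℝ => fderiv ℝ f (p + s • v) v)
      (fderiv ℝ (fderiv ℝ f) (p + t • v) v v) t := by
  have happly : HasFDerivAt (fun q => fderiv ℝ f q v)
      ((fderiv ℝ (fderiv ℝ f) (p + t • v)).flip v) (p + t • v) := by
    simpa using hf.hasFDerivAt.clm_apply (hasFDerivAt_const v _)
  exact happly.comp_hasDerivAt t (hasDerivAt_line p v t)

theorem ContDiffAt.differentiableAt_fderiv (hf : ContDiffAt ℝ 2 f p) :
    DifferentiableAt ℝ (fderiv ℝ f) p :=
  (hf.fderiv_right (m := 1) (by norm_num)).differentiableAt (by norm_num)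

theorem ContDiffAt.continuousAt_fderiv_fderiv (hf : ContDiffAt ℝ 2 f p) :
    ContinuousAt (fderiv ℝ (fderiv ℝ f)) p :=
  ((hf.fderiv_right (m := 1) (by norm_num)).fderiv_right (m := 0) le_rfl).continuousAt

theorem fderiv_fderiv_neg (f : E → ℝ) :
    fderiv ℝ (fderiv ℝ fun x => -f x) = -fderiv ℝ (fderiv ℝ f) := by
  have h : (fderiv ℝ fun x => -f x) = fun x => -fderiv ℝ f x := funext fun x => fderiv_fun_neg
  rw [h]
  exact funext fun x => fderiv_fun_neg

theorem lt_comp_line_of_fderiv_eq_zero {S : Set ℝ} (hS : Convex ℝ S) (hSo : IsOpen S)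
    (h0 : (0 : ℝ) ∈ S) (hf : ∀ t ∈ S, ContDiffAt ℝ 2 f (p + t • v))
    (hpos : ∀ t ∈ S, 0 < fderiv ℝ (fderiv ℝ f) (p + t • v) v v) (hcrit : fderiv ℝ f p = 0)
    {t : ℝ} (ht : t ∈ S) (ht0 : t ≠ 0) : f p < f (p + t • v) := by
  have hconv : StrictConvexOn ℝ S fun s : ℝ => f (p + s • v) :=
    strictConvexOn_of_hasDerivAt2_pos hS hSo
      (fun s hs => ((hf s hs).differentiableAt (by norm_num)).hasDerivAt_comp_line)
      (fun s hs => (hf s hs).differentiableAt_fderiv.hasDerivAt_fderiv_comp_line) hpos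
  have hd : HasDerivAt (fun s : ℝ => f (p + s • v)) 0 0 := by
    simpa [hcrit] using ((hf 0 h0).differentiableAt (by norm_num)).hasDerivAt_comp_line
  simpa using hconv.lt_of_hasDerivAt_eq_zero h0 hd ht ht0

theorem isLocalMin_comp_line (hf : ContDiffAt ℝ 2 f p) (hcrit : fderiv ℝ f p = 0)
    (hv : 0 < fderiv ℝ (fderiv ℝ f) p v v) : IsLocalMin (fun t : ℝ => f (p + t • v)) 0 := by
  have hnear : ∀ᶠ q in 𝓝 p, ContDiffAt ℝ 2 f q ∧ 0 < fderiv ℝ (fderiv ℝ f) q v v :=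
    (hf.eventually (by simp)).and
      (((hf.continuousAt_fderiv_fderiv.clm_apply continuousAt_const).clm_apply
        continuousAt_const).eventually (lt_mem_nhds hv))
  have hline : Tendsto (fun t : ℝ => p + t • v) (𝓝 0) (𝓝 p) := by
    simpa using (hasDerivAt_line p v 0).continuousAt.tendsto
  obtain ⟨ε, hε, hball⟩ := eventually_nhds_iff_ball.1 (hline.eventually hnear)
  filter_upwards [ball_mem_nhds 0 hε] with t ht
  rcases eq_or_ne t 0 with rfl | ht0
  · exact le_rfl
  · simpa using (lt_comp_line_of_fderiv_eq_zero (convex_ball 0 ε) isOpen_ball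
      (mem_ball_self hε) (fun s hs => (hball s hs).1) (fun s hs => (hball s hs).2) hcrit
      ht ht0).le

theorem isLocalMax_comp_line (hf : ContDiffAt ℝ 2 f p) (hcrit : fderiv ℝ f p = 0)
    (hv : fderiv ℝ (fderiv ℝ f) p v v < 0) : IsLocalMax (fun t : ℝ => f (p + t • v)) 0 := by
  simpa using (isLocalMin_comp_line (f := fun x => -f x) hf.neg (by simp [hcrit])
    (by simpa [fderiv_fderiv_neg] using hv)).neg

theorem ContinuousAt.eventually_forall_sphere_pos {X : Type*} [TopologicalSpace X]
    [ProperSpace E] {B : X → E →L[ℝ] E →L[ℝ] ℝ} {x₀ : X} (hB : ContinuousAt B x₀)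
    (hpos : ∀ v ≠ 0, 0 < B x₀ v v) : ∀ᶠ x in 𝓝 x₀, ∀ v ∈ sphere (0 : E) 1, 0 < B x v v := by
  refine (isCompact_sphere 0 1).eventually_forall_of_forall_eventually fun v hv => ?_
  have hcont : ContinuousAt (fun z : X × E => B z.1 z.2 z.2) (x₀, v) :=
    ((hB.comp continuousAt_fst).clm_apply continuousAt_snd).clm_apply continuousAt_snd
  exact hcont.eventually (lt_mem_nhds (hpos v (ne_zero_of_mem_sphere one_ne_zero ⟨v, hv⟩)))

theorem eventually_nhdsNE_lt_of_fderiv_eq_zero [FiniteDimensional ℝ E] (hf : ContDiffAt ℝ 2 f p)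
    (hcrit : fderiv ℝ f p = 0) (hpos : ∀ v ≠ 0, 0 < fderiv ℝ (fderiv ℝ f) p v v) :
    ∀ᶠ x in 𝓝[≠] p, f p < f x := by
  obtain ⟨ε, hε, hball⟩ := eventually_nhds_iff_ball.1
    ((hf.eventually (by simp)).and
      (hf.continuousAt_fderiv_fderiv.eventually_forall_sphere_pos hpos))
  filter_upwards [nhdsWithin_le_nhds (ball_mem_nhds p hε), self_mem_nhdsWithin]
    with x hxε hxp
  -- `x = p + r • u` with `‖u‖ = 1`; positivity on the unit sphere makes `ε` work for every `u`
  set r := ‖x - p‖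
  have hr : 0 < r := norm_pos_iff.2 (sub_ne_zero.2 hxp)
  set u := r⁻¹ • (x - p)
  have hu : ‖u‖ = 1 := by simp [u, r, norm_smul, hr.ne']
  have hline : ∀ t ∈ ball (0 : ℝ) ε, p + t • u ∈ ball p ε := by
    intro t ht
    simpa [norm_smul, hu] using ht
  have hx : p + r • u = x := by simp [u, smul_smul, hr.ne']
  rw [← hx]
  refine lt_comp_line_of_fderiv_eq_zero (convex_ball 0 ε) isOpen_ball
    (mem_ball_self hε) (fun t ht => (hball _ (hline t ht)).1)
    (fun t ht => (hball _ (hline t ht)).2 u (by simpa using hu)) hcrit ?_ hr.ne'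
  simpa [abs_of_pos hr, r, dist_eq_norm] using hxε

theorem eventually_nhdsNE_gt_of_fderiv_eq_zero [FiniteDimensional ℝ E] (hf : ContDiffAt ℝ 2 f p)
    (hcrit : fderiv ℝ f p = 0) (hneg : ∀ v ≠ 0, fderiv ℝ (fderiv ℝ f) p v v < 0) :
    ∀ᶠ x in 𝓝[≠] p, f x < f p := by
  simpa using eventually_nhdsNE_lt_of_fderiv_eq_zero (f := fun x => -f x) hf.neg
    (by simp [hcrit]) (fun v hv => by simpa [fderiv_fderiv_neg] using hneg v hv)

theorem HasDerivAt.not_isLocalMax_comp {γ : ℝ → E} {γ' : E} {t₀ : ℝ} (hγ : HasDerivAt γ γ' t₀)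
    (hγ' : γ' ≠ 0) (hf : ∀ᶠ x in 𝓝[≠] γ t₀, f (γ t₀) < f x) : ¬IsLocalMax (f ∘ γ) t₀ := by
  intro hmax
  obtain ⟨s, hlt, hle⟩ :=
    ((hγ.tendsto_nhdsNE hγ').eventually hf |>.and (hmax.filter_mono nhdsWithin_le_nhds)).exists
  exact hlt.not_ge hle

theorem HasDerivAt.not_isLocalMin_comp {γ : ℝ → E} {γ' : E} {t₀ : ℝ} (hγ : HasDerivAt γ γ' t₀)
    (hγ' : γ' ≠ 0) (hf : ∀ᶠ x in 𝓝[≠] γ t₀, f x < f (γ t₀)) : ¬IsLocalMin (f ∘ γ) t₀ :=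
  fun hmin => hγ.not_isLocalMax_comp (f := fun x => -f x) hγ' (by simpa using hf) hmin.neg

end Line

section Plane

variable {f : ℝ × ℝ → ℝ} {p : ℝ × ℝ}

theorem ContDiffAt.fderiv_fderiv_apply_self_eq_hessianForm (hf : ContDiffAt ℝ 2 f p)
    (v : ℝ × ℝ) : fderiv ℝ (fderiv ℝ f) p v v = hessianForm f p v := by
  have hpartial : ∀ u w : ℝ × ℝ,
      fderiv ℝ (fun q => fderiv ℝ f q u) p w = fderiv ℝ (fderiv ℝ f) p w u := fun u w => by
    rw [fderiv_clm_apply hf.differentiableAt_fderiv (differentiableAt_const u)]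
    simp
  have hsymm := hf.isSymmSndFDerivAt (by simp)
  have hv : v = v.1 • ((1 : ℝ), (0 : ℝ)) + v.2 • ((0 : ℝ), (1 : ℝ)) := by ext <;> simp
  rw [hessianForm, fxx, fxy, fyy, hpartial, hpartial, hpartial]
  conv_lhs => rw [hv]
  simp only [map_add, map_smul, _root_.add_apply, _root_.smul_apply, smul_eq_mul,
    hsymm (0, 1) (1, 0)]
  ring

theorem hessianForm_smul (c : ℝ) (v : ℝ × ℝ) :
    hessianForm f p (c • v) = c ^ 2 * hessianForm f p v := by
  simp only [hessianForm, Prod.smul_fst, Prod.smul_snd, smul_eq_mul]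
  ring

theorem fxx_mul_hessianForm (v : ℝ × ℝ) :
    fxx f p * hessianForm f p v =
      (fxx f p * v.1 + fxy f p * v.2) ^ 2 + (fxx f p * fyy f p - fxy f p ^ 2) * v.2 ^ 2 := by
  rw [hessianForm]
  ring

theorem fxx_mul_hessianForm_pos (hΔ : 0 < fxx f p * fyy f p - fxy f p ^ 2) {v : ℝ × ℝ}
    (hv : v ≠ 0) : 0 < fxx f p * hessianForm f p v := by
  rw [fxx_mul_hessianForm]
  rcases eq_or_ne v.2 0 with h2 | h2
  · have h1 : v.1 ≠ 0 := fun h1 => hv (Prod.ext h1 h2)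
    have hfxx : fxx f p ≠ 0 := by
      intro h
      rw [h] at hΔ
      nlinarith [sq_nonneg (fxy f p)]
    rw [h2]
    simpa using sq_pos_of_ne_zero (mul_ne_zero hfxx h1)
  · positivity

theorem exists_hessianForm_mul_neg (hΔ : fxx f p * fyy f p - fxy f p ^ 2 < 0) :
    ∃ v w : ℝ × ℝ, hessianForm f p v * hessianForm f p w < 0 := by
  by_cases ha : fxx f p = 0
  · by_cases hc : fyy f p = 0
    · refine ⟨(1, 1), (1, -1), ?_⟩
      simp only [hessianForm, ha, hc] at hΔ ⊢
      nlinarith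
    · refine ⟨(0, 1), (fyy f p, -fxy f p), ?_⟩
      have : hessianForm f p (0, 1) * hessianForm f p (fyy f p, -fxy f p) =
          fyy f p ^ 2 * (fxx f p * fyy f p - fxy f p ^ 2) := by
        simp only [hessianForm]
        ring
      rw [this]
      exact mul_neg_of_pos_of_neg (by positivity) hΔ
  · refine ⟨(1, 0), (-fxy f p, fxx f p), ?_⟩
    have : hessianForm f p (1, 0) * hessianForm f p (-fxy f p, fxx f p) =
        fxx f p ^ 2 * (fxx f p * fyy f p - fxy f p ^ 2) := by
      simp only [hessianForm]
      ring
    rw [this]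
    exact mul_neg_of_pos_of_neg (by positivity) hΔ

theorem exists_hessianForm_neg_pos (hΔ : fxx f p * fyy f p - fxy f p ^ 2 < 0) :
    ∃ v w : ℝ × ℝ, hessianForm f p v < 0 ∧ 0 < hessianForm f p w := by
  obtain ⟨v, w, h⟩ := exists_hessianForm_mul_neg hΔ
  rcases mul_neg_iff.1 h with ⟨hv, hw⟩ | ⟨hv, hw⟩
  · exact ⟨w, v, hw, hv⟩
  · exact ⟨v, w, hv, hw⟩

theorem ne_smul_of_hessianForm_mul_neg {v w : ℝ × ℝ}
    (h : hessianForm f p v * hessianForm f p w < 0) (c : ℝ) : v ≠ c • w := by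
  rintro rfl
  rw [hessianForm_smul] at h
  nlinarith [sq_nonneg c, sq_nonneg (hessianForm f p w)]

end Plane

theorem exists_isRegularPath_line {D : Set (ℝ × ℝ)} {p v : ℝ × ℝ} (hp : p ∈ interior D)
    (hv : v ≠ 0) : ∃ a b, (0 : ℝ) ∈ Ioo a b ∧ IsRegularPath D (fun t => p + t • v) a b := by
  have hcont : Continuous fun t : ℝ => p + t • v := by fun_prop
  have hD : (fun t : ℝ => p + t • v) ⁻¹' D ∈ 𝓝 0 :=
    hcont.continuousAt.preimage_mem_nhds (by simpa using mem_interior_iff_mem_nhds.1 hp)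
  obtain ⟨a, b, -, hab, hsub⟩ := exists_Icc_mem_subset_of_mem_nhds hD
  have h0 : (0 : ℝ) ∈ Ioo a b := by simpa using mem_interior_iff_mem_nhds.2 hab
  refine ⟨a, b, h0, h0.1.trans h0.2, hcont.continuousOn, fun t ht => hsub ht, fun t _ => ?_⟩
  exact ⟨(hasDerivAt_line p v t).differentiableAt, by rwa [(hasDerivAt_line p v t).deriv]⟩

section Saddle

variable {D : Set (ℝ × ℝ)} {f : ℝ × ℝ → ℝ} {p : ℝ × ℝ}

theorem HasSaddleAt.fderiv_eq_zero (h : HasSaddleAt D f p) (hf : DifferentiableAt ℝ f p) :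
    fderiv ℝ f p = 0 := by
  obtain ⟨a₁, b₁, a₂, b₂, t₁, t₂, γ₁, γ₂, hγ₁, hγ₂, ht₁, ht₂, hp₁, hp₂, -, hwu, hmax, hmin⟩ := h
  obtain ⟨hd₁, hu⟩ := hγ₁.2.2.2 t₁ ht₁
  have hd₂ := (hγ₂.2.2.2 t₂ ht₂).1
  exact ContinuousLinearMap.coe_injective <|
    LinearMap.eq_zero_of_apply_eq_zero_of_ne_smul (by simp) hu hwu
      (hmax.hasDerivAt_eq_zero (hf.hasFDerivAt.comp_hasDerivAt_of_eq t₁ hd₁.hasDerivAt hp₁.symm))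
      (hmin.hasDerivAt_eq_zero (hf.hasFDerivAt.comp_hasDerivAt_of_eq t₂ hd₂.hasDerivAt hp₂.symm))

theorem HasSaddleAt.discriminant_nonpos (h : HasSaddleAt D f p) (hf : ContDiffAt ℝ 2 f p) :
    fxx f p * fyy f p - fxy f p ^ 2 ≤ 0 := by
  have hcrit := h.fderiv_eq_zero (hf.differentiableAt (by norm_num))
  obtain ⟨a₁, b₁, a₂, b₂, t₁, t₂, γ₁, γ₂, hγ₁, hγ₂, ht₁, ht₂, hp₁, hp₂, -, -, hmax, hmin⟩ := h
  obtain ⟨hd₁, hu⟩ := hγ₁.2.2.2 t₁ ht₁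
  obtain ⟨hd₂, hw⟩ := hγ₂.2.2.2 t₂ ht₂
  refine not_lt.1 fun hΔ => ?_
  have hdef : ∀ v ≠ 0, 0 < fxx f p * fderiv ℝ (fderiv ℝ f) p v v := fun v hv => by
    simpa [hf.fderiv_fderiv_apply_self_eq_hessianForm] using fxx_mul_hessianForm_pos hΔ hv
  rcases (left_ne_zero_of_mul (hdef (1, 0) (by simp)).ne').lt_or_gt with hneg | hpos
  · refine hd₂.hasDerivAt.not_isLocalMin_comp hw ?_ hmin
    rw [hp₂]
    exact eventually_nhdsNE_gt_of_fderiv_eq_zero hf hcrit fun v hv =>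
      neg_of_mul_pos_right (hdef v hv) hneg.le
  · refine hd₁.hasDerivAt.not_isLocalMax_comp hu ?_ hmax
    rw [hp₁]
    exact eventually_nhdsNE_lt_of_fderiv_eq_zero hf hcrit fun v hv =>
      pos_of_mul_pos_right (hdef v hv) hpos.le

theorem hasSaddleAt_of_discriminant_neg (hp : p ∈ interior D) (hf : ContDiffAt ℝ 2 f p)
    (hcrit : fderiv ℝ f p = 0) (hΔ : fxx f p * fyy f p - fxy f p ^ 2 < 0) :
    HasSaddleAt D f p := by
  obtain ⟨v, w, hv, hw⟩ := exists_hessianForm_neg_pos hΔ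
  have hvw := ne_smul_of_hessianForm_mul_neg (mul_neg_of_neg_of_pos hv hw)
  have hwv := ne_smul_of_hessianForm_mul_neg (mul_neg_of_pos_of_neg hw hv)
  obtain ⟨a₁, b₁, h₁, hγ₁⟩ := exists_isRegularPath_line hp (by simpa using hvw 0)
  obtain ⟨a₂, b₂, h₂, hγ₂⟩ := exists_isRegularPath_line hp (by simpa using hwv 0)
  rw [← hf.fderiv_fderiv_apply_self_eq_hessianForm] at hv hw
  refine ⟨a₁, b₁, a₂, b₂, 0, 0, _, _, hγ₁, hγ₂, h₁, h₂, by simp, by simp, ?_, ?_,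
    isLocalMax_comp_line hf hcrit hv, isLocalMin_comp_line hf hcrit hw⟩
    <;> simpa [(hasDerivAt_line _ _ _).deriv]

end Saddle

theorem saddle_iff_critical_and_neg_discriminant_general (D U : Set (ℝ × ℝ)) (p : ℝ × ℝ)
    (f : ℝ × ℝ → ℝ) (hp : p ∈ interior D) (hU : IsOpen U) (hpU : p ∈ U)
    (hf : ContDiffOn ℝ 2 f U) (hne : fxx f p * fyy f p - fxy f p ^ 2 ≠ 0) :
    HasSaddleAt D f p ↔
      fderiv ℝ f p = 0 ∧ fxx f p * fyy f p - fxy f p ^ 2 < 0 := by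
  have hfp : ContDiffAt ℝ 2 f p := hf.contDiffAt (hU.mem_nhds hpU)
  constructor
  · intro h
    exact ⟨h.fderiv_eq_zero (hfp.differentiableAt (by norm_num)),
      (h.discriminant_nonpos hfp).lt_of_ne hne⟩
  · rintro ⟨hcrit, hΔ⟩
    exact hasSaddleAt_of_discriminant_neg hp hfp hcrit hΔ

/-- If `f` has continuous first and second order partial derivatives on an open
neighborhood `U ⊆ D` of the interior point `p` and `Δf(p) ≠ 0`, then `f` has a saddle point
at `p` if and only if `∇f(p) = 0` and `Δf(p) < 0`. -/
theorem saddle_iff_critical_and_neg_discriminant (D U : Set (ℝ × ℝ)) (p : ℝ × ℝ)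
    (f : ℝ × ℝ → ℝ) (hp : p ∈ interior D) (hU : IsOpen U) (hpU : p ∈ U) (hUD : U ⊆ D)
    (hf : ContDiffOn ℝ 2 f U) (hne : fxx f p * fyy f p - fxy f p ^ 2 ≠ 0) :
    HasSaddleAt D f p ↔
      fderiv ℝ f p = 0 ∧ fxx f p * fyy f p - fxy f p ^ 2 < 0 :=
  saddle_iff_critical_and_neg_discriminant_general D U p f hp hU hpU hf hne
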